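/- One has ⟨n,m|q,p⟩ = ⟨⟨n,m|−q,p⟩⟩ − iπ(p·n − q·m) as complex numbers; in particular ⟨n,m|n,m⟩ = ⟨⟨n,m|−n,m⟩⟩. -/

import Mathlib

open scoped Real BigOperators
open Matrix

/-- The complex pairing ⟨⟨n,m|q,p⟩⟩ associated to a period matrix Ω. -/
noncomputable def dd {h : ℕ} (Ω : Matrix (Fin h) (Fin h) ℂ)
    (n m q p : Fin h → ℤ) : ℂ :=
  (Real.pi : ℂ) * ∑ j, ∑ k,
    ((p j : ℂ) + ∑ i, (q i : ℂ) * Ω i j) *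
    ((((Matrix.of fun a b => (Ω a b).im)⁻¹ : Matrix (Fin h) (Fin h) ℝ) j k : ℝ) : ℂ) *
    ((m k : ℂ) - ∑ l, (starRingEnd ℂ) (Ω k l) * (n l : ℂ))

/-- The real scalar product ⟨n,m|q,p⟩ = Re ⟨⟨n,m|−q,p⟩⟩. -/
noncomputable def sp {h : ℕ} (Ω : Matrix (Fin h) (Fin h) ℂ)
    (n m q p : Fin h → ℤ) : ℝ :=
  (dd Ω n m (-q) p).re

/-!
Write `Ω = X + iY`. The two vectors paired in `⟨⟨n,m|q,p⟩⟩` are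
`p + qΩ = (p + qX) + i qY` and `m - Ω̄n = (m - Xn) + i Yn`, so in the imaginary part of
their `Y⁻¹`-pairing the factor `Y⁻¹` cancels against `Y` on either side, leaving
`(p + qX)·n + q·(m - Xn) = p·n + q·m`. Hence `Im ⟨⟨n,m|-q,p⟩⟩ = π (p·n - q·m)`, while the real
part is `⟨n,m|q,p⟩` by definition.
-/

section
variable {ι : Type*} [Fintype ι]

lemma Complex.im_dotProduct_map_ofReal_mulVec (a b : ι → ℂ) (M : Matrix ι ι ℝ) :
    (a ⬝ᵥ (M.map (↑) *ᵥ b)).im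
      = (fun i => (a i).re) ⬝ᵥ M *ᵥ (fun i => (b i).im)
        + (fun i => (a i).im) ⬝ᵥ M *ᵥ (fun i => (b i).re) := by
  simp only [dotProduct, mulVec, Complex.im_sum, Complex.mul_im, Complex.mul_re, map_apply,
    Complex.ofReal_re, Complex.ofReal_im, Finset.mul_sum, ← Finset.sum_add_distrib]
  exact Finset.sum_congr rfl fun i _ => Finset.sum_congr rfl fun j _ => by ring

variable [DecidableEq ι]

theorem im_dotProduct_inv_im_mulVec (Ω : Matrix ι ι ℂ) (hΩ : IsUnit (Ω.map Complex.im).det)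
    (u x v y : ι → ℝ) :
    ((Complex.ofReal ∘ u + (Complex.ofReal ∘ x) ᵥ* Ω) ⬝ᵥ
        ((Ω.map Complex.im)⁻¹.map (↑) *ᵥ
          (Complex.ofReal ∘ v - Ω.map (starRingEnd ℂ) *ᵥ (Complex.ofReal ∘ y)))).im
      = u ⬝ᵥ y + x ⬝ᵥ v := by
  set X := Ω.map Complex.re
  set Y := Ω.map Complex.im
  set a := Complex.ofReal ∘ u + (Complex.ofReal ∘ x) ᵥ* Ω
  set b := Complex.ofReal ∘ v - Ω.map (starRingEnd ℂ) *ᵥ (Complex.ofReal ∘ y)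
  have re_a : (fun j => (a j).re) = u + x ᵥ* X := by ext j; simp [a, X, vecMul, dotProduct]
  have im_a : (fun j => (a j).im) = x ᵥ* Y := by ext j; simp [a, Y, vecMul, dotProduct]
  have re_b : (fun k => (b k).re) = v - X *ᵥ y := by ext k; simp [b, X, mulVec, dotProduct]
  have im_b : (fun k => (b k).im) = Y *ᵥ y := by ext k; simp [b, Y, mulVec, dotProduct]
  rw [Complex.im_dotProduct_map_ofReal_mulVec, re_a, im_a, re_b, im_b,
    mulVec_mulVec, nonsing_inv_mul Y hΩ, one_mulVec, ← dotProduct_mulVec, mulVec_mulVec,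
    mul_nonsing_inv Y hΩ, one_mulVec, add_dotProduct, dotProduct_sub, dotProduct_mulVec]
  abel

end

lemma dd_eq_pi_mul_dotProduct {h : ℕ} (Ω : Matrix (Fin h) (Fin h) ℂ) (n m q p : Fin h → ℤ) :
    dd Ω n m q p = Real.pi *
      ((Complex.ofReal ∘ Int.cast ∘ p + (Complex.ofReal ∘ Int.cast ∘ q) ᵥ* Ω) ⬝ᵥ
        ((Ω.map Complex.im)⁻¹.map (↑) *ᵥ
          (Complex.ofReal ∘ Int.cast ∘ m
            - Ω.map (starRingEnd ℂ) *ᵥ (Complex.ofReal ∘ Int.cast ∘ n)))) := by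
  simp only [dd, mul_assoc, Finset.mul_sum, dotProduct, Pi.add_apply, Function.comp_apply,
    Complex.ofReal_intCast, vecMul, mulVec, map_apply, Pi.sub_apply]
  rfl

lemma im_dd {h : ℕ} (Ω : Matrix (Fin h) (Fin h) ℂ) (hΩ : IsUnit (Ω.map Complex.im).det)
    (n m q p : Fin h → ℤ) :
    (dd Ω n m q p).im = Real.pi * ((∑ j, p j * n j + ∑ j, q j * m j : ℤ) : ℝ) := by
  rw [dd_eq_pi_mul_dotProduct, Complex.im_ofReal_mul, im_dotProduct_inv_im_mulVec Ω hΩ]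
  simp [dotProduct]

lemma ofReal_sp {h : ℕ} (Ω : Matrix (Fin h) (Fin h) ℂ) (hΩ : IsUnit (Ω.map Complex.im).det)
    (n m q p : Fin h → ℤ) :
    ((sp Ω n m q p : ℝ) : ℂ) = dd Ω n m (-q) p
      - Complex.I * (Real.pi : ℂ) * (((∑ j, p j * n j) - ∑ j, q j * m j : ℤ) : ℂ) := by
  conv_rhs => rw [← Complex.re_add_im (dd Ω n m (-q) p), im_dd Ω hΩ]
  simp only [sp, Pi.neg_apply, neg_mul, Finset.sum_neg_distrib, Int.cast_add, Int.cast_sum,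
    Int.cast_mul, Int.cast_neg, Complex.ofReal_mul, Complex.ofReal_add, Complex.ofReal_sum,
    Complex.ofReal_intCast, Complex.ofReal_neg, Int.cast_sub]
  ring

theorem stmt7_general (h : ℕ) (Ω : Matrix (Fin h) (Fin h) ℂ)
    (hpos : (Matrix.of fun i j => (Ω i j).im).PosDef)
    (n m q p : Fin h → ℤ) :
    ((sp Ω n m q p : ℝ) : ℂ)
        = dd Ω n m (-q) p
          - Complex.I * (Real.pi : ℂ) *
            (((∑ j, p j * n j) - ∑ j, q j * m j : ℤ) : ℂ)
    ∧ ((sp Ω n m n m : ℝ) : ℂ) = dd Ω n m (-n) m := by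
  have hΩ : IsUnit (Ω.map Complex.im).det := hpos.det_pos.ne'.isUnit
  refine ⟨ofReal_sp Ω hΩ n m q p, ?_⟩
  rw [ofReal_sp Ω hΩ, sub_eq_self]
  simp [mul_comm]

theorem stmt7 (h : ℕ) (Ω : Matrix (Fin h) (Fin h) ℂ)
    (hsym : Ω.IsSymm)
    (hpos : (Matrix.of fun i j => (Ω i j).im).PosDef)
    (n m q p : Fin h → ℤ) :
    ((sp Ω n m q p : ℝ) : ℂ)
        = dd Ω n m (-q) p
          - Complex.I * (Real.pi : ℂ) *
            (((∑ j, p j * n j) - ∑ j, q j * m j : ℤ) : ℂ)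
    ∧ ((sp Ω n m n m : ℝ) : ℂ) = dd Ω n m (-n) m :=
  stmt7_general h Ω hpos n m q p
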